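/- arXiv:2504.19717 — 6 statements merged into one kernel-verified Lean document; each statement's English description precedes it below -/
import Mathlib

section
/- Let N and M be positive integers, let μ = Σ_{j=1}^{m} w_j δ_{p_j} be a probability measure on ℝ^N with finite support (so w_j > 0, Σ_j w_j = 1, and the points p_j ∈ ℝ^N are distinct), and let g_1, …, g_M : ℝ^N → ℝ be functions. Then there exists a probability measure μ̃ = Σ_{j=1}^{m} w̃_j δ_{p_j} with w̃_j ≥ 0 such that: (i) the support of μ̃ is contained in the support of μ; (ii) ∫ g_i dμ̃ = ∫ g_i dμ for every i = 1, …, M; and (iii) the cardinality of the support of μ̃ is at most M + 1. -/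
/-!
The moment vector `x = Σ_j w_j v_j`, where `v_j = (g_1(p_j), …, g_M(p_j)) ∈ ℝ^M`, lies in the convex
hull of the `v_j`, so by Carathéodory's theorem it is a convex combination of at most `M + 1` of
them. Transporting those coefficients back to the indices `j` gives the reduced weights.
-/

open Finset Module

section FiberSum

variable {ι κ R : Type*} [Fintype κ] [DecidableEq ι]

def fiberSum [AddCommMonoid R] (c : κ → ι) (u : κ → R) (j : ι) : R :=
  ∑ k with c k = j, u k

theorem fiberSum_nonneg [AddCommMonoid R] [PartialOrder R] [IsOrderedAddMonoid R]
    {u : κ → R} (hu : ∀ k, 0 ≤ u k) (c : κ → ι) (j : ι) : 0 ≤ fiberSum c u j :=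
  Finset.sum_nonneg fun k _ => hu k

variable [Fintype ι]

theorem sum_fiberSum [AddCommMonoid R] (c : κ → ι) (u : κ → R) :
    ∑ j, fiberSum c u j = ∑ k, u k :=
  Finset.sum_fiberwise univ c u

theorem sum_fiberSum_smul {E : Type*} [Semiring R] [AddCommMonoid E] [Module R E]
    (c : κ → ι) (u : κ → R) (v : ι → E) :
    ∑ j, fiberSum c u j • v j = ∑ k, u k • v (c k) := by
  simp only [fiberSum, Finset.sum_smul]
  rw [← Finset.sum_fiberwise univ c fun k => u k • v (c k)]
  refine Finset.sum_congr rfl fun j _ => Finset.sum_congr rfl fun k hk => ?_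
  rw [(Finset.mem_filter.mp hk).2]

theorem card_support_fiberSum_le [AddCommMonoid R] [DecidableEq R] (c : κ → ι) (u : κ → R) :
    #{j | fiberSum c u j ≠ 0} ≤ Fintype.card κ := by
  calc #{j | fiberSum c u j ≠ 0}
      ≤ #(univ.image c) := by
        refine Finset.card_le_card fun j hj => ?_
        obtain ⟨k, hk, -⟩ := Finset.exists_ne_zero_of_sum_ne_zero (Finset.mem_filter.mp hj).2
        exact Finset.mem_image.mpr ⟨k, mem_univ k, (Finset.mem_filter.mp hk).2⟩
    _ ≤ Fintype.card κ := Finset.card_image_le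

end FiberSum

theorem exists_convex_weights_card_support_le_finrank_succ {ι E : Type*} [Fintype ι]
    [AddCommGroup E] [Module ℝ E] [FiniteDimensional ℝ E]
    (v : ι → E) {w : ι → ℝ} (hw₀ : ∀ j, 0 ≤ w j) (hw₁ : ∑ j, w j = 1) :
    ∃ w' : ι → ℝ, (∀ j, 0 ≤ w' j) ∧ ∑ j, w' j = 1 ∧
      ∑ j, w' j • v j = ∑ j, w j • v j ∧ #{j | w' j ≠ 0} ≤ finrank ℝ E + 1 := by
  classical
  have hx : ∑ j, w j • v j ∈ convexHull ℝ (Set.range v) :=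
    mem_convexHull_of_exists_fintype w v hw₀ hw₁ Set.mem_range_self rfl
  obtain ⟨κ, _, z, u, hz, hz_indep, hu₀, hu₁, hzu⟩ := eq_pos_convex_span_of_mem_convexHull hx
  have hκ : Fintype.card κ ≤ finrank ℝ E + 1 :=
    hz_indep.card_le_finrank_succ.trans
      (Nat.succ_le_succ (Submodule.finrank_le (vectorSpan ℝ (Set.range z))))
  choose c hc using fun k => hz (Set.mem_range_self k)
  refine ⟨fiberSum c u, fiberSum_nonneg (fun k => (hu₀ k).le) c, by rw [sum_fiberSum, hu₁],
    ?_, (card_support_fiberSum_le c u).trans hκ⟩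
  rw [sum_fiberSum_smul, ← hzu]
  simp only [hc]

theorem reduced_measure_exists_general
    (N M m : ℕ)
    (p : Fin m → EuclideanSpace ℝ (Fin N))
    (w : Fin m → ℝ) (hw : ∀ j, 0 < w j) (hwsum : ∑ j, w j = 1)
    (g : Fin M → EuclideanSpace ℝ (Fin N) → ℝ) :
    ∃ w' : Fin m → ℝ,
      (∀ j, 0 ≤ w' j) ∧
      (∑ j, w' j = 1) ∧
      (∀ j, w' j ≠ 0 → w j ≠ 0) ∧
      (∀ i, ∑ j, w' j * g i (p j) = ∑ j, w j * g i (p j)) ∧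
      (Finset.univ.filter fun j => w' j ≠ 0).card ≤ M + 1 := by
  obtain ⟨w', hw'₀, hw'₁, hmoments, hcard⟩ :=
    exists_convex_weights_card_support_le_finrank_succ (fun j i => g i (p j))
      (fun j => (hw j).le) hwsum
  refine ⟨w', hw'₀, hw'₁, fun j _ => (hw j).ne', fun i => ?_, ?_⟩
  · simpa only [Finset.sum_apply, Pi.smul_apply, smul_eq_mul] using congrFun hmoments i
  · simpa only [finrank_fin_fun] using hcard

/-- **Existence of a reduced measure** (Statement 0).
Given a discrete probability measure `μ = Σ_j w_j δ_{p_j}` on `ℝ^N` with finite support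
(distinct points `p_j`, positive weights summing to `1`) and test functions
`g_1, …, g_M : ℝ^N → ℝ`, there exists a probability measure `μ̃ = Σ_j w̃_j δ_{p_j}`
with nonnegative weights such that (i) its support is contained in that of `μ`,
(ii) all integrals of the test functions are preserved, and (iii) the cardinality of
its support is at most `M + 1`. -/
theorem reduced_measure_exists
    (N M m : ℕ) (hN : 0 < N) (hM : 0 < M) (hm : 0 < m)
    (p : Fin m → EuclideanSpace ℝ (Fin N)) (hp : Function.Injective p)
    (w : Fin m → ℝ) (hw : ∀ j, 0 < w j) (hwsum : ∑ j, w j = 1)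
    (g : Fin M → EuclideanSpace ℝ (Fin N) → ℝ) :
    ∃ w' : Fin m → ℝ,
      (∀ j, 0 ≤ w' j) ∧
      (∑ j, w' j = 1) ∧
      (∀ j, w' j ≠ 0 → w j ≠ 0) ∧
      (∀ i, ∑ j, w' j * g i (p j) = ∑ j, w j * g i (p j)) ∧
      (Finset.univ.filter fun j => w' j ≠ 0).card ≤ M + 1 :=
  reduced_measure_exists_general N M m p w hw hwsum g
end

section
/- Let A be a real M × n matrix and let β ∈ ℝ^n have all coordinates nonnegative. Then there exists β′ ∈ ℝ^n with all coordinates nonnegative such that A β′ = A β and the number of nonzero coordinates of β′ is at most rank(A). -/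
/-!
Carathéodory's argument. If the support `S` of a nonnegative `β` has more than `rank A` elements,
the columns of `A` indexed by `S` are linearly dependent, so some `c ≠ 0` supported in `S` satisfies
`A c = 0`; we may take `c` to have a positive entry. Moving from `β` to `β - t c`, with
`t = min {β j / c j | c j > 0}`, keeps the vector nonnegative and `A β` unchanged, and kills the
coordinate where the minimum is attained. Iterating brings the support size down to `rank A`.
-/

open Finset Matrix

namespace Matrix

variable {m ι K : Type*} [Fintype ι]

theorem exists_ne_zero_mulVec_eq_zero_of_rank_lt_card [Field K] (A : Matrix m ι K)
    (h : A.rank < Fintype.card ι) : ∃ v ≠ 0, A *ᵥ v = 0 := by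
  have hker : A.rank + Module.finrank K (LinearMap.ker A.mulVecLin) = Fintype.card ι := by
    rw [← Module.finrank_fintype_fun_eq_card K]
    exact A.mulVecLin.finrank_range_add_finrank_ker
  obtain ⟨v, hv, hv0⟩ := Submodule.exists_mem_ne_zero_of_ne_bot <|
    (Submodule.one_le_finrank_iff (S := LinearMap.ker A.mulVecLin)).mp (by omega)
  exact ⟨v, hv0, hv⟩

theorem exists_ne_zero_mulVec_eq_zero_supported_of_rank_lt [Field K] (A : Matrix m ι K)
    (s : Finset ι) (h : A.rank < #s) : ∃ c ≠ 0, A *ᵥ c = 0 ∧ ∀ j ∉ s, c j = 0 := by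
  classical
  obtain ⟨v, hv0, hv⟩ := (A.submatrix id ((↑) : s → ι)).exists_ne_zero_mulVec_eq_zero_of_rank_lt_card
    ((rank_submatrix_le A id _).trans_lt (by simpa using h))
  obtain ⟨j, hj⟩ := Function.ne_iff.mp hv0
  set c : ι → K := fun i => if hi : i ∈ s then v ⟨i, hi⟩ else 0
  have hc : ∀ j : s, c j = v j := fun j => dif_pos j.2
  have hcs : ∀ j ∉ s, c j = 0 := fun j hj => dif_neg hj
  refine ⟨c, Function.ne_iff.mpr ⟨j, by rwa [hc]⟩, ?_, hcs⟩
  ext i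
  calc (A *ᵥ c) i = ∑ j ∈ s, A i j * c j :=
        (Finset.sum_subset (subset_univ s) fun j _ hj => by rw [hcs j hj, mul_zero]).symm
    _ = ∑ j : s, A i j * v j := by rw [← Finset.sum_coe_sort s]; simp only [hc]
    _ = 0 := congrFun hv i

end Matrix

section Caratheodory

variable {m ι K : Type*} [Fintype ι] [Field K] [LinearOrder K] [IsStrictOrderedRing K]

theorem exists_sub_mul_nonneg_and_eq_zero (β c : ι → K) (hβ : ∀ j, 0 ≤ β j) (hc : ∃ j, 0 < c j) :
    ∃ t : K, (∀ j, 0 ≤ β j - t * c j) ∧ ∃ j, c j ≠ 0 ∧ β j - t * c j = 0 := by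
  classical
  obtain ⟨j₀, hj₀, hmin⟩ := Finset.exists_min_image {j | 0 < c j} (fun j => β j / c j)
    (by simpa [Finset.Nonempty] using hc)
  rw [Finset.mem_filter_univ] at hj₀
  have ht : 0 ≤ β j₀ / c j₀ := div_nonneg (hβ j₀) hj₀.le
  refine ⟨β j₀ / c j₀, fun j => ?_, j₀, hj₀.ne', by rw [div_mul_cancel₀ _ hj₀.ne', sub_self]⟩
  rcases lt_or_ge 0 (c j) with hcj | hcj
  · have := (le_div_iff₀ hcj).mp (hmin j (by simpa using hcj))
    linarith
  · nlinarith [hβ j]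

theorem exists_nonneg_mulVec_eq_card_support_lt (A : Matrix m ι K) (β : ι → K)
    (hβ : ∀ j, 0 ≤ β j) (h : A.rank < #{j | β j ≠ 0}) :
    ∃ β' : ι → K, (∀ j, 0 ≤ β' j) ∧ A *ᵥ β' = A *ᵥ β ∧ #{j | β' j ≠ 0} < #{j | β j ≠ 0} := by
  classical
  obtain ⟨c₀, hc₀, hAc₀, hc₀S⟩ := A.exists_ne_zero_mulVec_eq_zero_supported_of_rank_lt _ h
  obtain ⟨c, hcpos, hAc, hcS⟩ : ∃ c : ι → K, (∃ j, 0 < c j) ∧ A *ᵥ c = 0 ∧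
      ∀ j ∉ ({j | β j ≠ 0} : Finset ι), c j = 0 := by
    obtain ⟨j, hj⟩ := Function.ne_iff.mp hc₀
    rcases hj.lt_or_gt with hneg | hpos
    · exact ⟨-c₀, ⟨j, by simpa using hneg⟩, by rw [mulVec_neg, hAc₀, neg_zero],
        fun i hi => by simp [hc₀S i hi]⟩
    · exact ⟨c₀, ⟨j, hpos⟩, hAc₀, hc₀S⟩
  obtain ⟨t, hnonneg, j₀, hcj₀, hj₀⟩ := exists_sub_mul_nonneg_and_eq_zero β c hβ hcpos
  refine ⟨β - t • c, hnonneg, by rw [mulVec_sub, mulVec_smul, hAc, smul_zero, sub_zero], ?_⟩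
  have hsupp : ∀ j, β j = 0 → (β - t • c) j = 0 := fun j hj => by
    simp [hj, hcS j (by simpa using hj)]
  refine Finset.card_lt_card <| (Finset.ssubset_iff_of_subset ?_).mpr ⟨j₀, ?_, ?_⟩
  · intro j
    simpa using mt (hsupp j)
  · simpa using fun h => hcj₀ (hcS j₀ (by simpa using h))
  · simpa using hj₀

theorem exists_nonneg_mulVec_eq_card_support_le_rank (A : Matrix m ι K) (β : ι → K)
    (hβ : ∀ j, 0 ≤ β j) :
    ∃ β' : ι → K, (∀ j, 0 ≤ β' j) ∧ A *ᵥ β' = A *ᵥ β ∧ #{j | β' j ≠ 0} ≤ A.rank := by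
  induction hk : #{j | β j ≠ 0} using Nat.strong_induction_on generalizing β with
  | _ k ih =>
  by_cases hle : k ≤ A.rank
  · exact ⟨β, hβ, rfl, hk ▸ hle⟩
  obtain ⟨β₁, hβ₁, hAβ₁, hlt⟩ := exists_nonneg_mulVec_eq_card_support_lt A β hβ (by omega)
  obtain ⟨β', hβ', hAβ', hcard⟩ := ih _ (hk ▸ hlt) β₁ hβ₁ rfl
  exact ⟨β', hβ', hAβ'.trans hAβ₁, hcard⟩

end Caratheodory

/-- **Linear-algebraic form of measure reduction** (Statement 1).
For a real `M × n` matrix `A` and a vector `β ∈ ℝ^n` with nonnegative coordinates,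
there exists a nonnegative vector `β'` with `A β' = A β` whose number of nonzero
coordinates is at most `rank A`. -/
theorem reduced_weights_exists
    (M n : ℕ) (A : Matrix (Fin M) (Fin n) ℝ)
    (β : Fin n → ℝ) (hβ : ∀ j, 0 ≤ β j) :
    ∃ β' : Fin n → ℝ,
      (∀ j, 0 ≤ β' j) ∧
      A.mulVec β' = A.mulVec β ∧
      (Finset.univ.filter fun j => β' j ≠ 0).card ≤ A.rank :=
  exists_nonneg_mulVec_eq_card_support_le_rank A β hβ
end

section
/- Let U ⊂ ℝ^N be a nonempty finite set and let rad(U) = max{‖p − p′‖ : p, p′ ∈ U}. Let μ and μ̃ be probability measures on ℝ^N, both with support contained in U, such that ∫ q dμ = ∫ q dμ̃ for every polynomial q : ℝ^N → ℝ of total degree at most m. Then for every (m+1)-times continuously differentiable function f : ℝ^N → ℝ, | ∫ f dμ − ∫ f dμ̃ | ≤ (2 · rad(U)^{m+1} / (m+1)!) · sup_{z ∈ conv(U)} ‖D^{m+1} f(z)‖, where ‖D^{m+1} f(z)‖ is the operator norm of the (m+1)-st Fréchet derivative and conv(U) is the convex hull of U. -/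
open MeasureTheory Set
open scoped Nat

/-! Let `T` be the Taylor polynomial of degree `m` of `f` at a point `p ∈ U`. Both measures give
`T` the same integral, so the two integrals of `f` differ by the difference of the integrals of
`f - T`, each at most `sup_U |f - T|` in absolute value. For `x ∈ U` the segment `[p, x]` lies in
`conv U`, so Lagrange's remainder along it bounds `|f x - T x|` by
`sup_{conv U} ‖D^{m+1} f‖ · ‖x - p‖^{m+1} / (m+1)!`, and `‖x - p‖ ≤ diam U`. -/

section Taylor

variable {E F : Type*} [NormedAddCommGroup E] [NormedSpace ℝ E]
  [NormedAddCommGroup F] [NormedSpace ℝ F]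

theorem iteratedDeriv_comp_add_smul {f : E → F} {n : WithTop ℕ∞} (hf : ContDiff ℝ n f)
    (p v : E) {k : ℕ} (hk : k ≤ n) (t : ℝ) :
    iteratedDeriv k (fun t : ℝ => f (p + t • v)) t
      = iteratedFDeriv ℝ k f (p + t • v) (fun _ => v) := by
  have hline : (fun t : ℝ => f (p + t • v)) = (fun y => f (p + y)) ∘ (1 : ℝ →L[ℝ] ℝ).smulRight v :=
    rfl
  have hshift : ContDiff ℝ n fun y => f (p + y) := hf.comp (contDiff_const.add contDiff_id)
  rw [iteratedDeriv_eq_iteratedFDeriv, hline,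
    ContinuousLinearMap.iteratedFDeriv_comp_right _ hshift t hk,
    iteratedFDeriv_comp_add_left]
  simp

noncomputable def taylorPolyAt (f : E → ℝ) (n : ℕ) (p x : E) : ℝ :=
  ∑ k ∈ Finset.range (n + 1), (k ! : ℝ)⁻¹ * iteratedFDeriv ℝ k f p (fun _ => x - p)

theorem abs_sub_taylorPolyAt_le {f : E → ℝ} {n : ℕ} (hf : ContDiff ℝ (n + 1) f) {p x : E}
    {S : ℝ} (hS : ∀ y ∈ segment ℝ p x, ‖iteratedFDeriv ℝ (n + 1) f y‖ ≤ S) :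
    |f x - taylorPolyAt f n p x| ≤ S * ‖x - p‖ ^ (n + 1) / (n + 1)! := by
  set g : ℝ → ℝ := fun t => f (p + t • (x - p))
  have hg : ContDiff ℝ (n + 1) g := hf.comp (contDiff_const.add (contDiff_id.smul contDiff_const))
  obtain ⟨t, ht, hlag⟩ :=
    taylor_mean_remainder_lagrange_iteratedDeriv zero_ne_one hg.contDiffOn
  rw [uIoo_of_le zero_le_one] at ht
  have hg1 : g 1 = f x := by simp [g]
  have htaylor : taylorWithinEval g n (uIcc 0 1) 0 1 = taylorPolyAt f n p x := by
    rw [taylor_within_apply, taylorPolyAt]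
    refine Finset.sum_congr rfl fun k hk => ?_
    have hkn : (k : WithTop ℕ∞) ≤ n + 1 := by exact_mod_cast (Finset.mem_range.mp hk).le
    rw [iteratedDerivWithin_eq_iteratedDeriv (uniqueDiffOn_uIcc zero_ne_one)
      (hg.of_le hkn).contDiffAt left_mem_uIcc, iteratedDeriv_comp_add_smul hf p (x - p) hkn]
    simp
  have hderiv : |iteratedDeriv (n + 1) g t| ≤ S * ‖x - p‖ ^ (n + 1) := by
    rw [iteratedDeriv_comp_add_smul hf p (x - p) (by exact_mod_cast le_rfl)]
    calc |iteratedFDeriv ℝ (n + 1) f (p + t • (x - p)) (fun _ => x - p)|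
        ≤ ‖iteratedFDeriv ℝ (n + 1) f (p + t • (x - p))‖ * ∏ _ : Fin (n + 1), ‖x - p‖ :=
          (iteratedFDeriv ℝ (n + 1) f _).le_opNorm _
      _ ≤ S * ‖x - p‖ ^ (n + 1) := by
          rw [Finset.prod_const, Finset.card_fin]
          gcongr
          exact hS _ (segment_eq_image' ℝ p x ▸ mem_image_of_mem _ (Ioo_subset_Icc_self ht))
  rw [hg1, htaylor] at hlag
  rw [hlag, sub_zero, one_pow, mul_one, abs_div, Nat.abs_cast]
  gcongr

theorem abs_sub_taylorPolyAt_le_of_mem {f : E → ℝ} {n : ℕ} (hf : ContDiff ℝ (n + 1) f)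
    {s : Set E} (hs : Bornology.IsBounded s) {p x : E} (hp : p ∈ s) (hx : x ∈ s) {S : ℝ}
    (hS : ∀ z ∈ convexHull ℝ s, ‖iteratedFDeriv ℝ (n + 1) f z‖ ≤ S) :
    |f x - taylorPolyAt f n p x| ≤ S * Metric.diam s ^ (n + 1) / (n + 1)! := by
  have hS0 : 0 ≤ S := (norm_nonneg _).trans (hS p (subset_convexHull ℝ s hp))
  refine (abs_sub_taylorPolyAt_le hf fun y hy => hS y <| (convex_convexHull ℝ s).segment_subset
    (subset_convexHull ℝ s hp) (subset_convexHull ℝ s hx) hy).trans ?_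
  gcongr
  exact dist_eq_norm x p ▸ Metric.dist_le_diam_of_mem hs hx hp

end Taylor

section PolynomialFunctions

variable {N : ℕ}

noncomputable def polyFunctionsDegreeLE (N m : ℕ) :
    Submodule ℝ (EuclideanSpace ℝ (Fin N) → ℝ) :=
  (MvPolynomial.restrictTotalDegree (Fin N) ℝ m).map
    (LinearMap.pi fun x => (MvPolynomial.aeval fun i => x i).toLinearMap)

theorem mem_polyFunctionsDegreeLE_iff {m : ℕ} {g : EuclideanSpace ℝ (Fin N) → ℝ} :
    g ∈ polyFunctionsDegreeLE N m ↔ ∃ P : MvPolynomial (Fin N) ℝ,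
      P.totalDegree ≤ m ∧ ∀ x, MvPolynomial.eval (fun i => x i) P = g x := by
  simp only [polyFunctionsDegreeLE, Submodule.mem_map, MvPolynomial.mem_restrictTotalDegree,
    funext_iff, LinearMap.pi_apply, AlgHom.toLinearMap_apply]
  rfl

theorem polyFunctionsDegreeLE_mono {k m : ℕ} (hkm : k ≤ m) :
    polyFunctionsDegreeLE N k ≤ polyFunctionsDegreeLE N m :=
  Submodule.map_mono fun P hP => by
    rw [MvPolynomial.mem_restrictTotalDegree] at hP ⊢
    exact hP.trans hkm

theorem prod_sub_mem_polyFunctionsDegreeLE {k : ℕ} (j : Fin k → Fin N)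
    (p : EuclideanSpace ℝ (Fin N)) :
    (fun x : EuclideanSpace ℝ (Fin N) => ∏ i, (x (j i) - p (j i))) ∈
      polyFunctionsDegreeLE N k := by
  set P : Fin k → MvPolynomial (Fin N) ℝ := fun i =>
    MvPolynomial.X (j i) - MvPolynomial.C (p (j i))
  refine mem_polyFunctionsDegreeLE_iff.mpr ⟨∏ i, P i, ?_, fun x => by simp [P]⟩
  calc (∏ i, P i).totalDegree
      ≤ ∑ i, (P i).totalDegree := MvPolynomial.totalDegree_finsetProd _ _
    _ ≤ ∑ _ : Fin k, 1 := Finset.sum_le_sum fun i _ =>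
        (MvPolynomial.totalDegree_sub_C_le _ _).trans (MvPolynomial.totalDegree_X _).le
    _ = k := by simp

theorem multilinear_diag_sub_mem_polyFunctionsDegreeLE {k : ℕ}
    (A : ContinuousMultilinearMap ℝ (fun _ : Fin k => EuclideanSpace ℝ (Fin N)) ℝ)
    (p : EuclideanSpace ℝ (Fin N)) :
    (fun x => A fun _ => x - p) ∈ polyFunctionsDegreeLE N k := by
  classical
  have hexpand : (fun x => A fun _ => x - p) = ∑ j : Fin k → Fin N,
      A (fun i => EuclideanSpace.single (j i) 1) •
        fun x : EuclideanSpace ℝ (Fin N) => ∏ i, (x (j i) - p (j i)) := by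
    ext x
    conv_lhs => rw [← (EuclideanSpace.basisFun (Fin N) ℝ).sum_repr (x - p)]
    simp [A.map_sum, A.map_smul_univ, mul_comm]
  rw [hexpand]
  exact Submodule.sum_mem _ fun j _ =>
    Submodule.smul_mem _ _ (prod_sub_mem_polyFunctionsDegreeLE j p)

theorem taylorPolyAt_mem_polyFunctionsDegreeLE (f : EuclideanSpace ℝ (Fin N) → ℝ) (m : ℕ)
    (p : EuclideanSpace ℝ (Fin N)) :
    taylorPolyAt f m p ∈ polyFunctionsDegreeLE N m := by
  have : taylorPolyAt f m p = ∑ k ∈ Finset.range (m + 1),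
      (k ! : ℝ)⁻¹ • fun x => iteratedFDeriv ℝ k f p fun _ => x - p := by
    ext x; simp [taylorPolyAt]
  rw [this]
  exact Submodule.sum_mem _ fun k hk => Submodule.smul_mem _ _ <|
    polyFunctionsDegreeLE_mono (Finset.mem_range_succ_iff.mp hk)
      (multilinear_diag_sub_mem_polyFunctionsDegreeLE _ p)

end PolynomialFunctions

theorem le_biSup_of_bddAbove_image {α β : Type*} [ConditionallyCompleteLattice β] {g : α → β}
    {s : Set α} (hg : BddAbove (g '' s)) {z : α} (hz : z ∈ s) : g z ≤ ⨆ x ∈ s, g x :=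
  le_ciSup₂ (f := fun x (_ : x ∈ s) => g x)
    (hg.mono <| iUnion_subset fun _ => range_subset_iff.mpr fun hx => mem_image_of_mem g hx) z hz

theorem Continuous.integrable_of_ae_mem_isCompact {X : Type*} [TopologicalSpace X] [T2Space X]
    [MeasurableSpace X] [OpensMeasurableSpace X] {μ : Measure X} [IsFiniteMeasure μ] {K : Set X}
    (hK : IsCompact K) (hμK : ∀ᵐ x ∂μ, x ∈ K) {E : Type*} [NormedAddCommGroup E] {g : X → E}
    (hg : Continuous g) :
    Integrable g μ := by
  rw [← Measure.restrict_eq_self_of_ae_mem hμK]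
  exact hg.continuousOn.integrableOn_compact hK

theorem abs_integral_sub_integral_le_two_mul {X : Type*} [MeasurableSpace X] {μ ν : Measure X}
    [IsProbabilityMeasure μ] [IsProbabilityMeasure ν] {f g : X → ℝ} {C : ℝ}
    (hfμ : Integrable f μ) (hgμ : Integrable g μ) (hfν : Integrable f ν) (hgν : Integrable g ν)
    (hg : ∫ x, g x ∂μ = ∫ x, g x ∂ν) (hμ : ∀ᵐ x ∂μ, |f x - g x| ≤ C)
    (hν : ∀ᵐ x ∂ν, |f x - g x| ≤ C) :
    |(∫ x, f x ∂μ) - ∫ x, f x ∂ν| ≤ 2 * C := by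
  have hbound : ∀ ρ : Measure X, IsProbabilityMeasure ρ → (∀ᵐ x ∂ρ, |f x - g x| ≤ C) →
      |∫ x, (f x - g x) ∂ρ| ≤ C := fun ρ _ hρ => by
    simpa using norm_integral_le_of_norm_le_const (μ := ρ) (f := fun x => f x - g x) hρ
  have hsplit : (∫ x, f x ∂μ) - ∫ x, f x ∂ν = (∫ x, (f x - g x) ∂μ) - ∫ x, (f x - g x) ∂ν := by
    rw [integral_sub hfμ hgμ, integral_sub hfν hgν, hg]
    ring
  rw [hsplit, two_mul]
  exact (abs_sub _ _).trans (add_le_add (hbound μ ‹_› hμ) (hbound ν ‹_› hν))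

theorem patch_recombination_error_general
    (N m : ℕ)
    (U : Finset (EuclideanSpace ℝ (Fin N))) (hU : U.Nonempty)
    (μ μ' : Measure (EuclideanSpace ℝ (Fin N)))
    [IsProbabilityMeasure μ] [IsProbabilityMeasure μ']
    (hμ : μ (↑U : Set (EuclideanSpace ℝ (Fin N)))ᶜ = 0)
    (hμ' : μ' (↑U : Set (EuclideanSpace ℝ (Fin N)))ᶜ = 0)
    (hpoly : ∀ P : MvPolynomial (Fin N) ℝ, P.totalDegree ≤ m →
      ∫ x, MvPolynomial.eval (fun i => x i) P ∂μ
        = ∫ x, MvPolynomial.eval (fun i => x i) P ∂μ')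
    (f : EuclideanSpace ℝ (Fin N) → ℝ) (hf : ContDiff ℝ (↑(m + 1)) f) :
    |(∫ x, f x ∂μ) - ∫ x, f x ∂μ'|
      ≤ 2 * Metric.diam (↑U : Set (EuclideanSpace ℝ (Fin N))) ^ (m + 1)
          / (Nat.factorial (m + 1) : ℝ) *
        ⨆ z ∈ convexHull ℝ (↑U : Set (EuclideanSpace ℝ (Fin N))),
          ‖iteratedFDeriv ℝ (m + 1) f z‖ := by
  obtain ⟨p, hp⟩ := hU
  have hUc : IsCompact (U : Set (EuclideanSpace ℝ (Fin N))) := U.finite_toSet.isCompact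
  set S := ⨆ z ∈ convexHull ℝ (U : Set (EuclideanSpace ℝ (Fin N))),
    ‖iteratedFDeriv ℝ (m + 1) f z‖
  have hS : ∀ z ∈ convexHull ℝ (U : Set _), ‖iteratedFDeriv ℝ (m + 1) f z‖ ≤ S := fun z hz =>
    le_biSup_of_bddAbove_image ((U.finite_toSet.isCompact_convexHull ℝ).bddAbove_image
      (hf.continuous_iteratedFDeriv le_rfl).norm.continuousOn) hz
  have htaylor : ∀ x ∈ (U : Set _), |f x - taylorPolyAt f m p x|
      ≤ S * Metric.diam (U : Set (EuclideanSpace ℝ (Fin N))) ^ (m + 1) / (m + 1)! :=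
    fun x hx => abs_sub_taylorPolyAt_le_of_mem (by exact_mod_cast hf) hUc.isBounded hp hx hS
  obtain ⟨P, hPdeg, hPeval⟩ :=
    mem_polyFunctionsDegreeLE_iff.mp (taylorPolyAt_mem_polyFunctionsDegreeLE f m p)
  have hμU : ∀ᵐ x ∂μ, x ∈ (U : Set _) := mem_ae_iff.mpr hμ
  have hμ'U : ∀ᵐ x ∂μ', x ∈ (U : Set _) := mem_ae_iff.mpr hμ'
  have hT : Continuous (taylorPolyAt f m p) := by
    unfold taylorPolyAt; fun_prop
  calc |(∫ x, f x ∂μ) - ∫ x, f x ∂μ'|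
      ≤ 2 * (S * Metric.diam (U : Set (EuclideanSpace ℝ (Fin N))) ^ (m + 1) / (m + 1)!) :=
        abs_integral_sub_integral_le_two_mul
          (hf.continuous.integrable_of_ae_mem_isCompact hUc hμU)
          (hT.integrable_of_ae_mem_isCompact hUc hμU)
          (hf.continuous.integrable_of_ae_mem_isCompact hUc hμ'U)
          (hT.integrable_of_ae_mem_isCompact hUc hμ'U)
          (by simpa only [hPeval] using hpoly P hPdeg)
          (hμU.mono htaylor) (hμ'U.mono htaylor)
    _ = _ := by ring

/-- **Per-patch recombination error estimate** (Statement 5).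
Let `U ⊂ ℝ^N` be a nonempty finite set of radius `rad(U) = max{‖p − p'‖ : p, p' ∈ U}`
(the metric diameter of `U`).  If the probability measures `μ` and `μ'` are both
supported in `U` and agree on all polynomials of total degree at most `m`, then for
every `(m+1)`-times continuously differentiable `f : ℝ^N → ℝ`,
`|∫ f dμ − ∫ f dμ'| ≤ (2 rad(U)^(m+1)/(m+1)!) · sup_{z ∈ conv U} ‖D^{m+1} f(z)‖`. -/
theorem patch_recombination_error
    (N m : ℕ) (hN : 1 ≤ N)
    (U : Finset (EuclideanSpace ℝ (Fin N))) (hU : U.Nonempty)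
    (μ μ' : Measure (EuclideanSpace ℝ (Fin N)))
    [IsProbabilityMeasure μ] [IsProbabilityMeasure μ']
    (hμ : μ (↑U : Set (EuclideanSpace ℝ (Fin N)))ᶜ = 0)
    (hμ' : μ' (↑U : Set (EuclideanSpace ℝ (Fin N)))ᶜ = 0)
    (hpoly : ∀ P : MvPolynomial (Fin N) ℝ, P.totalDegree ≤ m →
      ∫ x, MvPolynomial.eval (fun i => x i) P ∂μ
        = ∫ x, MvPolynomial.eval (fun i => x i) P ∂μ')
    (f : EuclideanSpace ℝ (Fin N) → ℝ) (hf : ContDiff ℝ (↑(m + 1)) f) :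
    |(∫ x, f x ∂μ) - ∫ x, f x ∂μ'|
      ≤ 2 * Metric.diam (↑U : Set (EuclideanSpace ℝ (Fin N))) ^ (m + 1)
          / (Nat.factorial (m + 1) : ℝ) *
        ⨆ z ∈ convexHull ℝ (↑U : Set (EuclideanSpace ℝ (Fin N))),
          ‖iteratedFDeriv ℝ (m + 1) f z‖ :=
  patch_recombination_error_general N m U hU μ μ' hμ hμ' hpoly f hf
end

section
/- Let U_1, …, U_l be pairwise disjoint nonempty finite subsets of ℝ^N and let ν be a probability measure with support equal to U_1 ∪ … ∪ U_l. For each k with ν(U_k) > 0, let ν|_{U_k} denote the conditional probability measure ν|_{U_k}(·) = ν(· ∩ U_k)/ν(U_k), and let ν̃_k be a probability measure with support contained in U_k such that ∫ q dν̃_k = ∫ q d(ν|_{U_k}) for every polynomial q of total degree at most m. Set μ = Σ_{k=1}^{l} ν(U_k) ν̃_k. Then for every (m+1)-times continuously differentiable f : ℝ^N → ℝ, | ∫ f dν − ∫ f dμ | ≤ (2/(m+1)!) Σ_{k=1}^{l} ν(U_k) · rad(U_k)^{m+1} · sup_{z ∈ conv(U_k)} ‖D^{m+1} f(z)‖. 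-/
/-!
On a patch `U` of positive weight, the conditional measure `ν[|U]` and `ν'` are probability
measures on `U` that give the same integral to the degree-`m` Taylor polynomial of `f` at a point
`p ∈ U`. The difference of the integrals of `f` is therefore the difference of the integrals of
the Taylor remainder, which on `U` is bounded, via Taylor's formula along the segment
`[p, x] ⊆ conv U`, by `rad(U)^(m+1) sup_{conv U} ‖D^{m+1} f‖ / (m+1)!`. Weighting these patch
errors by `ν(U)` and summing over the patches, which partition the support of `ν`, gives the bound.
-/

open MeasureTheory ProbabilityTheory Set
open scoped Nat

section Taylor

variable {E F : Type*} [NormedAddCommGroup E] [NormedSpace ℝ E]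
  [NormedAddCommGroup F] [NormedSpace ℝ F] [CompleteSpace F]

theorem norm_sub_taylor_le_of_norm_iteratedFDeriv_le {f : E → F} {n : ℕ} {x y : E} {C : ℝ}
    (hf : ∀ t ∈ Icc (0 : ℝ) 1, ContDiffAt ℝ (n + 1) f (x + t • y))
    (hC : ∀ t ∈ Icc (0 : ℝ) 1, ‖iteratedFDeriv ℝ (n + 1) f (x + t • y)‖ ≤ C) :
    ‖f (x + y) - ∑ k ∈ Finset.range (n + 1), (k ! : ℝ)⁻¹ • iteratedFDeriv ℝ k f x (fun _ ↦ y)‖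
      ≤ C * ‖y‖ ^ (n + 1) / (n + 1)! := by
  rw [map_add_eq_sum_add_integral_iteratedFDeriv hf, add_sub_cancel_left, norm_smul,
    norm_inv, RCLike.norm_natCast]
  have hint : ‖∫ t in (0 : ℝ)..1, (1 - t) ^ n • iteratedFDeriv ℝ (n + 1) f (x + t • y) (fun _ ↦ y)‖
      ≤ ∫ t in (0 : ℝ)..1, (1 - t) ^ n * (C * ‖y‖ ^ (n + 1)) := by
    refine intervalIntegral.norm_integral_le_of_norm_le zero_le_one
      (Filter.Eventually.of_forall fun t ht ↦ ?_) (Continuous.intervalIntegrable (by fun_prop) _ _)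
    have ht' : t ∈ Icc (0 : ℝ) 1 := Ioc_subset_Icc_self ht
    rw [norm_smul, Real.norm_of_nonneg (pow_nonneg (sub_nonneg.2 ht'.2) n)]
    gcongr
    · exact pow_nonneg (sub_nonneg.2 ht'.2) n
    · calc _ ≤ ‖iteratedFDeriv ℝ (n + 1) f (x + t • y)‖ * ∏ _ : Fin (n + 1), ‖y‖ :=
            ContinuousMultilinearMap.le_opNorm _ _
        _ ≤ C * ‖y‖ ^ (n + 1) := by
            rw [Finset.prod_const, Finset.card_univ, Fintype.card_fin]
            gcongr
            exact hC t ht'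
  have hpow : ∫ t in (0 : ℝ)..1, (1 - t) ^ n = 1 / (n + 1) := by
    simp [intervalIntegral.integral_comp_sub_left (fun t : ℝ ↦ t ^ n)]
  rw [intervalIntegral.integral_mul_const, hpow] at hint
  calc (n ! : ℝ)⁻¹ * ‖_‖ ≤ (n ! : ℝ)⁻¹ * (1 / (n + 1) * (C * ‖y‖ ^ (n + 1))) := by gcongr
    _ = C * ‖y‖ ^ (n + 1) / (n + 1)! := by
        rw [Nat.factorial_succ]; push_cast; field_simp

end Taylor

section Polynomial

variable {N : ℕ}

theorem ContinuousMultilinearMap.exists_totalDegree_le_eval_eq {j : ℕ}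
    (D : ContinuousMultilinearMap ℝ (fun _ : Fin j ↦ EuclideanSpace ℝ (Fin N)) ℝ)
    (p : EuclideanSpace ℝ (Fin N)) :
    ∃ P : MvPolynomial (Fin N) ℝ, P.totalDegree ≤ j ∧
      ∀ x : EuclideanSpace ℝ (Fin N), MvPolynomial.eval (fun i ↦ x i) P = D (fun _ ↦ x - p) := by
  classical
  set e := EuclideanSpace.basisFun (Fin N) ℝ
  refine ⟨∑ d : Fin j → Fin N, MvPolynomial.C (D fun a ↦ e (d a)) *
      ∏ a, (MvPolynomial.X (d a) - MvPolynomial.C (p (d a))), ?_, fun x ↦ ?_⟩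
  · refine (MvPolynomial.totalDegree_finsetSum _ _).trans (Finset.sup_le fun d _ ↦ ?_)
    refine (MvPolynomial.totalDegree_mul _ _).trans ?_
    rw [MvPolynomial.totalDegree_C, zero_add]
    refine (MvPolynomial.totalDegree_finsetProd _ _).trans ?_
    calc ∑ a, (MvPolynomial.X (d a) - MvPolynomial.C (p (d a)) : MvPolynomial (Fin N) ℝ).totalDegree
        ≤ ∑ _a : Fin j, 1 := Finset.sum_le_sum fun a _ ↦
          (MvPolynomial.totalDegree_sub_C_le _ _).trans (MvPolynomial.totalDegree_X _).le
      _ = j := by simp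
  · have hxp : x - p = ∑ i, (x i - p i) • e i := by
      simpa [e] using ((EuclideanSpace.basisFun (Fin N) ℝ).sum_repr (x - p)).symm
    rw [hxp, D.map_sum]
    simp only [_root_.map_sum, map_mul, map_prod, map_sub, MvPolynomial.eval_C,
      MvPolynomial.eval_X]
    refine Finset.sum_congr rfl fun d _ ↦ ?_
    rw [D.map_smul_univ (fun a ↦ x (d a) - p (d a)) (fun a ↦ e (d a)), smul_eq_mul, mul_comm]

theorem exists_totalDegree_le_eval_eq_taylor (f : EuclideanSpace ℝ (Fin N) → ℝ) (m : ℕ)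
    (p : EuclideanSpace ℝ (Fin N)) :
    ∃ P : MvPolynomial (Fin N) ℝ, P.totalDegree ≤ m ∧ ∀ x : EuclideanSpace ℝ (Fin N),
      MvPolynomial.eval (fun i ↦ x i) P =
        ∑ k ∈ Finset.range (m + 1), (k ! : ℝ)⁻¹ • iteratedFDeriv ℝ k f p (fun _ ↦ x - p) := by
  choose P hPdeg hPeval using fun k ↦ (iteratedFDeriv ℝ k f p).exists_totalDegree_le_eval_eq p
  refine ⟨∑ k ∈ Finset.range (m + 1), (k ! : ℝ)⁻¹ • P k, ?_, fun x ↦ ?_⟩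
  · refine (MvPolynomial.totalDegree_finsetSum _ _).trans (Finset.sup_le fun k hk ↦ ?_)
    exact (MvPolynomial.totalDegree_smul_le _ _).trans
      ((hPdeg k).trans (Nat.lt_succ_iff.1 (Finset.mem_range.1 hk)))
  · simp only [map_sum, MvPolynomial.smul_eval, hPeval, smul_eq_mul]

end Polynomial

section FiniteSupport

variable {α E : Type*} [MeasurableSpace α] [MeasurableSingletonClass α]
  [NormedAddCommGroup E] {μ μ₁ μ₂ : Measure α} {T : Finset α}

theorem integrable_of_measure_compl_finset_eq_zero [IsFiniteMeasure μ]
    (hμ : μ (↑T : Set α)ᶜ = 0) (f : α → E) : Integrable f μ := by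
  rw [← Measure.restrict_eq_self_of_ae_mem (ae_iff.2 hμ)]
  exact IntegrableOn.finset

theorem abs_integral_sub_integral_le_of_abs_sub_le
    [IsProbabilityMeasure μ₁] [IsProbabilityMeasure μ₂]
    (h₁ : μ₁ (↑T : Set α)ᶜ = 0) (h₂ : μ₂ (↑T : Set α)ᶜ = 0) {f g : α → ℝ}
    (hg : ∫ x, g x ∂μ₁ = ∫ x, g x ∂μ₂) {b : ℝ} (hfg : ∀ x ∈ T, |f x - g x| ≤ b) :
    |∫ x, f x ∂μ₁ - ∫ x, f x ∂μ₂| ≤ 2 * b := by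
  have hbound : ∀ μ : Measure α, [IsProbabilityMeasure μ] → μ (↑T : Set α)ᶜ = 0 →
      |∫ x, (f x - g x) ∂μ| ≤ b := fun μ _ hμ ↦ by
    simpa using norm_integral_le_of_norm_le_const (μ := μ) (f := fun x ↦ f x - g x)
      ((ae_iff.2 hμ).mono fun x hx ↦ hfg x (by simpa using hx))
  have hsplit : ∫ x, f x ∂μ₁ - ∫ x, f x ∂μ₂
      = ∫ x, (f x - g x) ∂μ₁ - ∫ x, (f x - g x) ∂μ₂ := by
    simp only [integral_sub (integrable_of_measure_compl_finset_eq_zero h₁ _)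
      (integrable_of_measure_compl_finset_eq_zero h₁ _),
      integral_sub (integrable_of_measure_compl_finset_eq_zero h₂ _)
      (integrable_of_measure_compl_finset_eq_zero h₂ _), hg, sub_sub_sub_cancel_right]
  rw [hsplit, two_mul]
  exact (abs_sub _ _).trans (add_le_add (hbound μ₁ h₁) (hbound μ₂ h₂))

end FiniteSupport

section Patch

variable {N m : ℕ} {T : Finset (EuclideanSpace ℝ (Fin N))}
  {f : EuclideanSpace ℝ (Fin N) → ℝ}

theorem abs_integral_sub_integral_le_of_moments_eq
    {μ₁ μ₂ : Measure (EuclideanSpace ℝ (Fin N))} [IsProbabilityMeasure μ₁]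
    [IsProbabilityMeasure μ₂] (h₁ : μ₁ (↑T : Set (EuclideanSpace ℝ (Fin N)))ᶜ = 0)
    (h₂ : μ₂ (↑T : Set (EuclideanSpace ℝ (Fin N)))ᶜ = 0)
    (hmatch : ∀ P : MvPolynomial (Fin N) ℝ, P.totalDegree ≤ m →
      ∫ x, MvPolynomial.eval (fun i ↦ x i) P ∂μ₁ = ∫ x, MvPolynomial.eval (fun i ↦ x i) P ∂μ₂)
    (hf : ContDiff ℝ (↑(m + 1)) f) :
    |∫ x, f x ∂μ₁ - ∫ x, f x ∂μ₂| ≤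
      2 / (m + 1)! * (Metric.diam (↑T : Set (EuclideanSpace ℝ (Fin N))) ^ (m + 1) *
        ⨆ z ∈ convexHull ℝ (↑T : Set (EuclideanSpace ℝ (Fin N))),
          ‖iteratedFDeriv ℝ (m + 1) f z‖) := by
  obtain ⟨p, hp⟩ : T.Nonempty := by
    by_contra hT
    simp [Finset.not_nonempty_iff_eq_empty.1 hT] at h₁
  set S := convexHull ℝ (↑T : Set (EuclideanSpace ℝ (Fin N)))
  set M := ⨆ z ∈ S, ‖iteratedFDeriv ℝ (m + 1) f z‖
  have hM : ∀ z ∈ S, ‖iteratedFDeriv ℝ (m + 1) f z‖ ≤ M := by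
    obtain ⟨C, hC⟩ := ((T.finite_toSet.isCompact_convexHull (𝕜 := ℝ)).image
      (hf.continuous_iteratedFDeriv le_rfl).norm).bddAbove
    refine fun z hz ↦ le_ciSup₂ (f := fun z (_ : z ∈ S) ↦ ‖iteratedFDeriv ℝ (m + 1) f z‖)
      ⟨C, ?_⟩ z hz
    rintro _ ⟨_, ⟨y, rfl⟩, hy, rfl⟩
    exact hC ⟨y, hy, rfl⟩
  have hM₀ : 0 ≤ M := (norm_nonneg _).trans (hM p (subset_convexHull ℝ _ hp))
  obtain ⟨P, hPdeg, hPeval⟩ := exists_totalDegree_le_eval_eq_taylor f m p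
  rw [show ∀ d : ℝ, 2 / (m + 1)! * (d * M) = 2 * (M * d / (m + 1)!) by intro; ring]
  refine abs_integral_sub_integral_le_of_abs_sub_le h₁ h₂ (hmatch P hPdeg) fun x hx ↦ ?_
  have hseg : ∀ t ∈ Icc (0 : ℝ) 1, p + t • (x - p) ∈ S := fun t ht ↦
    (convex_convexHull ℝ _).segment_subset (subset_convexHull ℝ _ hp) (subset_convexHull ℝ _ hx)
      (by rw [segment_eq_image']; exact ⟨t, ht, rfl⟩)
  have htaylor := norm_sub_taylor_le_of_norm_iteratedFDeriv_le (x := p) (y := x - p)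
    (fun t _ ↦ (by exact_mod_cast hf : ContDiff ℝ (m + 1) f).contDiffAt)
    (fun t ht ↦ hM _ (hseg t ht))
  rw [add_sub_cancel, Real.norm_eq_abs] at htaylor
  rw [hPeval]
  refine htaylor.trans ?_
  gcongr
  rw [← dist_eq_norm]
  exact Metric.dist_le_diam_of_mem T.finite_toSet.isBounded hx hp

theorem abs_setIntegral_sub_integral_smul_le {ν : Measure (EuclideanSpace ℝ (Fin N))}
    [IsFiniteMeasure ν] {ρ : Measure (EuclideanSpace ℝ (Fin N))}
    (hprob : 0 < ν T → IsProbabilityMeasure ρ)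
    (hsub : 0 < ν T → ρ (↑T : Set (EuclideanSpace ℝ (Fin N)))ᶜ = 0)
    (hmatch : 0 < ν T → ∀ P : MvPolynomial (Fin N) ℝ, P.totalDegree ≤ m →
      ∫ x, MvPolynomial.eval (fun i ↦ x i) P ∂ρ = ∫ x, MvPolynomial.eval (fun i ↦ x i) P ∂ν[|T])
    (hf : ContDiff ℝ (↑(m + 1)) f) :
    |∫ x in T, f x ∂ν - ∫ x, f x ∂(ν T • ρ)| ≤
      2 / (m + 1)! * ((ν T).toReal * Metric.diam (↑T : Set (EuclideanSpace ℝ (Fin N))) ^ (m + 1) *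
        ⨆ z ∈ convexHull ℝ (↑T : Set (EuclideanSpace ℝ (Fin N))),
          ‖iteratedFDeriv ℝ (m + 1) f z‖) := by
  rcases eq_zero_or_pos (ν T) with h0 | hpos
  · simp [Measure.restrict_eq_zero.2 h0, h0]
  have := hprob hpos
  have := cond_isProbabilityMeasure (μ := ν) hpos.ne'
  have hrestrict : ∫ x in T, f x ∂ν = (ν T).toReal * ∫ x, f x ∂ν[|T] := by
    rw [ProbabilityTheory.cond, integral_smul_measure, ENNReal.toReal_inv, smul_eq_mul,
      mul_inv_cancel_left₀ (ENNReal.toReal_pos hpos.ne' (measure_ne_top _ _)).ne']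
  have hcond : ν[|T] (↑T : Set (EuclideanSpace ℝ (Fin N)))ᶜ = 0 := by
    rw [cond_apply T.measurableSet]; simp
  rw [hrestrict, integral_smul_measure, smul_eq_mul, ← mul_sub, abs_mul, ENNReal.abs_toReal,
    abs_sub_comm]
  calc _ ≤ (ν T).toReal * (2 / (m + 1)! *
        (Metric.diam (↑T : Set (EuclideanSpace ℝ (Fin N))) ^ (m + 1) *
          ⨆ z ∈ convexHull ℝ (↑T : Set (EuclideanSpace ℝ (Fin N))),
            ‖iteratedFDeriv ℝ (m + 1) f z‖)) := by
        gcongr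
        exact abs_integral_sub_integral_le_of_moments_eq (hsub hpos) hcond (hmatch hpos) hf
    _ = _ := by ring

end Patch

theorem weighted_recombination_error_general
    (N m l : ℕ)
    (U : Fin l → Finset (EuclideanSpace ℝ (Fin N)))
    (hdisj : ∀ j k, j ≠ k → Disjoint (U j) (U k))
    (ν : Measure (EuclideanSpace ℝ (Fin N))) [IsProbabilityMeasure ν]
    (hsupp : ν (⋃ k, (↑(U k) : Set (EuclideanSpace ℝ (Fin N))))ᶜ = 0)
    (ν' : Fin l → Measure (EuclideanSpace ℝ (Fin N)))
    (hprob : ∀ k, 0 < ν ↑(U k) → IsProbabilityMeasure (ν' k))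
    (hsub : ∀ k, 0 < ν ↑(U k) → ν' k (↑(U k) : Set (EuclideanSpace ℝ (Fin N)))ᶜ = 0)
    (hmatch : ∀ k, 0 < ν ↑(U k) → ∀ P : MvPolynomial (Fin N) ℝ, P.totalDegree ≤ m →
      ∫ x, MvPolynomial.eval (fun i => x i) P ∂(ν' k)
        = ∫ x, MvPolynomial.eval (fun i => x i) P
            ∂((ν ↑(U k))⁻¹ • ν.restrict ↑(U k)))
    (f : EuclideanSpace ℝ (Fin N) → ℝ) (hf : ContDiff ℝ (↑(m + 1)) f) :
    |(∫ x, f x ∂ν) - ∫ x, f x ∂(∑ k, ν ↑(U k) • ν' k)|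
      ≤ 2 / (Nat.factorial (m + 1) : ℝ) *
        ∑ k, (ν ↑(U k)).toReal
          * Metric.diam (↑(U k) : Set (EuclideanSpace ℝ (Fin N))) ^ (m + 1)
          * ⨆ z ∈ convexHull ℝ (↑(U k) : Set (EuclideanSpace ℝ (Fin N))),
              ‖iteratedFDeriv ℝ (m + 1) f z‖ := by
  have hν : ∫ x, f x ∂ν = ∑ k, ∫ x in U k, f x ∂ν := by
    rw [← integral_iUnion_fintype (fun k ↦ (U k).measurableSet)
      (fun j k hjk ↦ Finset.disjoint_coe.2 (hdisj j k hjk)) fun _ ↦ IntegrableOn.finset,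
      Measure.restrict_eq_self_of_ae_mem (ae_iff.2 hsupp)]
  have hint : ∀ k, Integrable f (ν (U k) • ν' k) := by
    intro k
    rcases eq_zero_or_pos (ν (U k)) with h0 | hpos
    · simp [h0]
    · have := hprob k hpos
      exact (integrable_of_measure_compl_finset_eq_zero (hsub k hpos) f).smul_measure
        (measure_ne_top _ _)
  rw [hν, integral_finsetSum_measure fun k _ ↦ hint k, ← Finset.sum_sub_distrib, Finset.mul_sum]
  -- `ν[|U k]` is by definition the measure `(ν (U k))⁻¹ • ν.restrict (U k)` of `hmatch`.
  exact (Finset.abs_sum_le_sum_abs _ _).trans <| Finset.sum_le_sum fun k _ ↦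
    abs_setIntegral_sub_integral_smul_le (hprob k) (hsub k) (hmatch k) hf

/-- **Refined (weighted) recombination error bound over a patch division** (Statement 6).
Let `U_1, …, U_l` be pairwise disjoint nonempty finite subsets of `ℝ^N` and let `ν` be a
probability measure whose support equals `U_1 ∪ … ∪ U_l`.  For each patch `U_k` of
positive weight, let `ν'_k` be a probability measure supported in `U_k` matching the
conditional measure `ν|_{U_k} = ν(U_k)⁻¹ ν.restrict U_k` on all polynomials of total
degree at most `m`, and let `μ = Σ_k ν(U_k) ν'_k` be the recombined measure.  Then for
every `(m+1)`-times continuously differentiable `f : ℝ^N → ℝ`,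
`|∫ f dν − ∫ f dμ| ≤ (2/(m+1)!) Σ_k ν(U_k) rad(U_k)^(m+1) sup_{conv U_k} ‖D^{m+1} f‖`. -/
theorem weighted_recombination_error
    (N m l : ℕ) (hN : 1 ≤ N) (hl : 1 ≤ l)
    (U : Fin l → Finset (EuclideanSpace ℝ (Fin N)))
    (hUne : ∀ k, (U k).Nonempty)
    (hdisj : ∀ j k, j ≠ k → Disjoint (U j) (U k))
    (ν : Measure (EuclideanSpace ℝ (Fin N))) [IsProbabilityMeasure ν]
    (hsupp : ν (⋃ k, (↑(U k) : Set (EuclideanSpace ℝ (Fin N))))ᶜ = 0)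
    (hfull : ∀ p ∈ ⋃ k, (↑(U k) : Set (EuclideanSpace ℝ (Fin N))), 0 < ν {p})
    (ν' : Fin l → Measure (EuclideanSpace ℝ (Fin N)))
    (hprob : ∀ k, 0 < ν ↑(U k) → IsProbabilityMeasure (ν' k))
    (hsub : ∀ k, 0 < ν ↑(U k) → ν' k (↑(U k) : Set (EuclideanSpace ℝ (Fin N)))ᶜ = 0)
    (hmatch : ∀ k, 0 < ν ↑(U k) → ∀ P : MvPolynomial (Fin N) ℝ, P.totalDegree ≤ m →
      ∫ x, MvPolynomial.eval (fun i => x i) P ∂(ν' k)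
        = ∫ x, MvPolynomial.eval (fun i => x i) P
            ∂((ν ↑(U k))⁻¹ • ν.restrict ↑(U k)))
    (f : EuclideanSpace ℝ (Fin N) → ℝ) (hf : ContDiff ℝ (↑(m + 1)) f) :
    |(∫ x, f x ∂ν) - ∫ x, f x ∂(∑ k, ν ↑(U k) • ν' k)|
      ≤ 2 / (Nat.factorial (m + 1) : ℝ) *
        ∑ k, (ν ↑(U k)).toReal
          * Metric.diam (↑(U k) : Set (EuclideanSpace ℝ (Fin N))) ^ (m + 1)
          * ⨆ z ∈ convexHull ℝ (↑(U k) : Set (EuclideanSpace ℝ (Fin N))),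
              ‖iteratedFDeriv ℝ (m + 1) f z‖ :=
  weighted_recombination_error_general N m l U hdisj ν hsupp ν' hprob hsub hmatch f hf
end

section
/- Let T > 0, let m ≥ 2 be an integer, and let γ > m be a real number. For each integer n ≥ 2 define the partition t_i = T (1 − (1 − i/n)^γ) of [0, T] for i = 0, 1, …, n, and set s_i = t_i − t_{i−1}. Then there exists a constant C > 0, depending only on T, m and γ, such that for every n ≥ 2, s_n^{1/2} + Σ_{i=1}^{n−1} Σ_{j=m}^{m+1} s_i^{(j+1)/2} / (T − t_i)^{j/2} ≤ C n^{−(m−1)/2}. -/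
/-!
Write `u_i = 1 - i/n`, so that `T - t_i = T u_i^γ` and `s_i = T((u_i + 1/n)^γ - u_i^γ)`.
For `i < n` we have `1/n ≤ u_i`, so the mean value theorem (in the form of Bernoulli's
inequality) gives `s_i ≤ Tγ 2^(γ-1) u_i^(γ-1)/n`, and the `j`-th summand is
`O(n^(-(j+1)/2) u_i^β)` with `β = (γ - j - 1)/2`. Since `j ≤ m + 1 < γ + 1`, `β > -1`, hence
`Σ_i u_i^β = n^(-β) Σ_{k<n} k^β = O(n)` (for `β < 0` by concavity of `x ↦ x^(β+1)`), and the
`j`-th sum is `O(n^((1-j)/2))`. The last step `s_n = T n^(-γ)` is even smaller.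
-/

open Real Finset

theorem rpow_sub_rpow_le_mul_sub {a b γ : ℝ} (hb : 0 ≤ b) (hab : b ≤ a) (hγ : 1 ≤ γ) :
    a ^ γ - b ^ γ ≤ γ * a ^ (γ - 1) * (a - b) := by
  obtain rfl | ha := (hb.trans hab).eq_or_lt
  · simp [le_antisymm hab hb, zero_rpow (by linarith : γ ≠ 0)]
  have bernoulli := one_add_mul_self_le_rpow_one_add
    (by linarith [div_nonneg hb ha.le] : -1 ≤ b / a - 1) hγ
  rw [add_sub_cancel, div_rpow hb ha.le, le_div_iff₀ (rpow_pos_of_pos ha γ)] at bernoulli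
  have : (1 + γ * (b / a - 1)) * a ^ γ = a ^ γ - γ * a ^ (γ - 1) * (a - b) := by
    rw [rpow_sub_one ha.ne']; field_simp; ring
  linarith

theorem mul_sub_le_rpow_sub_rpow {a b p : ℝ} (hb : 0 ≤ b) (hab : b ≤ a) (hp₀ : 0 ≤ p)
    (hp₁ : p ≤ 1) : p * a ^ (p - 1) * (a - b) ≤ a ^ p - b ^ p := by
  obtain rfl | ha := (hb.trans hab).eq_or_lt
  · simp [le_antisymm hab hb]
  have bernoulli := rpow_one_add_le_one_add_mul_self
    (by linarith [div_nonneg hb ha.le] : -1 ≤ b / a - 1) hp₀ hp₁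
  rw [add_sub_cancel, div_rpow hb ha.le, div_le_iff₀ (rpow_pos_of_pos ha p)] at bernoulli
  have : (1 + p * (b / a - 1)) * a ^ p = a ^ p - p * a ^ (p - 1) * (a - b) := by
    rw [rpow_sub_one ha.ne']; field_simp; ring
  linarith

theorem sum_range_succ_rpow_le_of_nonneg {β : ℝ} (hβ : 0 ≤ β) (N : ℕ) :
    ∑ k ∈ range N, ((k : ℝ) + 1) ^ β ≤ (N : ℝ) ^ (β + 1) := by
  calc ∑ k ∈ range N, ((k : ℝ) + 1) ^ β ≤ ∑ _k ∈ range N, (N : ℝ) ^ β := by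
        gcongr with k hk
        exact_mod_cast mem_range.mp hk
    _ = (N : ℝ) ^ (β + 1) := by
        rcases N.eq_zero_or_pos with rfl | hN
        · simp [zero_rpow (by linarith : β + 1 ≠ 0)]
        rw [sum_const, card_range, nsmul_eq_mul, rpow_add_one (by positivity)]
        ring

theorem sum_range_succ_rpow_le_of_nonpos {β : ℝ} (hβ : -1 < β) (hβ₀ : β ≤ 0) (N : ℕ) :
    ∑ k ∈ range N, ((k : ℝ) + 1) ^ β ≤ (N : ℝ) ^ (β + 1) / (β + 1) := by
  have hp : 0 < β + 1 := by linarith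
  have concavity (k : ℕ) :
      ((k : ℝ) + 1) ^ β ≤ (((k : ℝ) + 1) ^ (β + 1) - (k : ℝ) ^ (β + 1)) / (β + 1) := by
    rw [le_div_iff₀ hp]
    have := mul_sub_le_rpow_sub_rpow (a := (k : ℝ) + 1) k.cast_nonneg (by linarith) hp.le
      (by linarith : β + 1 ≤ 1)
    simpa [mul_comm] using this
  calc ∑ k ∈ range N, ((k : ℝ) + 1) ^ β
      ≤ ∑ k ∈ range N, (((k : ℝ) + 1) ^ (β + 1) - (k : ℝ) ^ (β + 1)) / (β + 1) :=
        sum_le_sum fun k _ => concavity k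
    _ = (N : ℝ) ^ (β + 1) / (β + 1) := by
        have telescope := sum_range_sub (fun k : ℕ => (k : ℝ) ^ (β + 1)) N
        push_cast at telescope
        rw [← sum_div, telescope, zero_rpow hp.ne', sub_zero]

theorem sum_range_succ_rpow_le {β : ℝ} (hβ : -1 < β) (N : ℕ) :
    ∑ k ∈ range N, ((k : ℝ) + 1) ^ β ≤ (1 + (β + 1)⁻¹) * (N : ℝ) ^ (β + 1) := by
  have hp : 0 < β + 1 := by linarith
  have hN : 0 ≤ (N : ℝ) ^ (β + 1) := by positivity
  rcases le_total 0 β with hβ₀ | hβ₀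
  · nlinarith [sum_range_succ_rpow_le_of_nonneg hβ₀ N, inv_pos.mpr hp]
  · have := sum_range_succ_rpow_le_of_nonpos hβ hβ₀ N
    rw [div_eq_inv_mul] at this
    nlinarith

theorem rpow_add_sub_rpow_le {u h γ : ℝ} (hu : 0 ≤ u) (hh : 0 ≤ h) (hhu : h ≤ u) (hγ : 1 ≤ γ) :
    (u + h) ^ γ - u ^ γ ≤ γ * 2 ^ (γ - 1) * u ^ (γ - 1) * h := by
  have hdoubling : (u + h) ^ (γ - 1) ≤ 2 ^ (γ - 1) * u ^ (γ - 1) := by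
    rw [← mul_rpow zero_le_two hu]
    exact rpow_le_rpow (by positivity) (by linarith) (by linarith)
  calc (u + h) ^ γ - u ^ γ ≤ γ * (u + h) ^ (γ - 1) * (u + h - u) :=
        rpow_sub_rpow_le_mul_sub hu (by linarith) hγ
    _ ≤ γ * (2 ^ (γ - 1) * u ^ (γ - 1)) * h := by
        rw [add_sub_cancel_left]
        gcongr
    _ = γ * 2 ^ (γ - 1) * u ^ (γ - 1) * h := by ring

theorem mul_rpow_add_sub_rpow_div_le {T u h γ q r : ℝ} (hT : 0 ≤ T) (hu : 0 < u) (hh : 0 ≤ h)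
    (hhu : h ≤ u) (hγ : 1 ≤ γ) (hq : 0 ≤ q) :
    (T * ((u + h) ^ γ - u ^ γ)) ^ q / (T * u ^ γ) ^ r ≤
      (T * γ * 2 ^ (γ - 1)) ^ q / T ^ r * u ^ ((γ - 1) * q - γ * r) * h ^ q := by
  have hγ₀ : 0 ≤ γ := by linarith
  have hincr : 0 ≤ (u + h) ^ γ - u ^ γ :=
    sub_nonneg.mpr (rpow_le_rpow hu.le (by linarith) hγ₀)
  calc (T * ((u + h) ^ γ - u ^ γ)) ^ q / (T * u ^ γ) ^ r
      ≤ (T * γ * 2 ^ (γ - 1) * u ^ (γ - 1) * h) ^ q / (T * u ^ γ) ^ r := by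
        gcongr ?_ ^ _ / _
        calc T * ((u + h) ^ γ - u ^ γ) ≤ T * (γ * 2 ^ (γ - 1) * u ^ (γ - 1) * h) := by
              gcongr
              exact rpow_add_sub_rpow_le hu.le hh hhu hγ
          _ = T * γ * 2 ^ (γ - 1) * u ^ (γ - 1) * h := by ring
    _ = (T * γ * 2 ^ (γ - 1)) ^ q / T ^ r * u ^ ((γ - 1) * q - γ * r) * h ^ q := by
        rw [mul_rpow (by positivity) hh, mul_rpow (by positivity) (by positivity),
          mul_rpow hT (by positivity), ← rpow_mul hu.le, ← rpow_mul hu.le,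
          rpow_sub hu]
        field_simp

theorem sum_Icc_one_sub_div_rpow_le {β : ℝ} (hβ : -1 < β) (n : ℕ) :
    ∑ i ∈ Icc 1 (n - 1), (1 - (i : ℝ) / n) ^ β ≤ (1 + (β + 1)⁻¹) * n := by
  rcases n.eq_zero_or_pos with rfl | hn
  · simp
  have hn' : (0 : ℝ) < n := by exact_mod_cast hn
  have reflect : ∑ i ∈ Icc 1 (n - 1), (1 - (i : ℝ) / n) ^ β
      = ∑ k ∈ range (n - 1), ((k : ℝ) + 1) ^ β / (n : ℝ) ^ β := by
    have term (i : ℕ) (hi : i ∈ Icc 1 (n - 1)) :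
        (1 - (i : ℝ) / n) ^ β = (((n - 1 - i : ℕ) : ℝ) + 1) ^ β / (n : ℝ) ^ β := by
      obtain ⟨hi₁, hi₂⟩ := mem_Icc.mp hi
      rw [← div_rpow (by positivity) hn'.le, Nat.cast_sub (by omega), Nat.cast_sub (by omega),
        Nat.cast_one]
      congr 1
      field_simp
      ring
    refine sum_nbij' (fun i => n - 1 - i) (fun k => n - 1 - k) ?_ ?_ ?_ ?_ term <;>
      intro i hi <;> simp only [mem_Icc, mem_range] at hi ⊢ <;> omega
  have hβ₁ : 0 < β + 1 := by linarith
  calc ∑ i ∈ Icc 1 (n - 1), (1 - (i : ℝ) / n) ^ β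
      = (∑ k ∈ range (n - 1), ((k : ℝ) + 1) ^ β) / (n : ℝ) ^ β := by rw [reflect, sum_div]
    _ ≤ (1 + (β + 1)⁻¹) * (n : ℝ) ^ (β + 1) / (n : ℝ) ^ β := by
        gcongr
        refine (sum_range_succ_rpow_le hβ (n - 1)).trans ?_
        gcongr
        exact_mod_cast Nat.sub_le n 1
    _ = (1 + (β + 1)⁻¹) * n := by
        rw [rpow_add_one hn'.ne']
        field_simp

noncomputable def kusuokaPartition (T γ : ℝ) (n i : ℕ) : ℝ := T * (1 - (1 - (i : ℝ) / n) ^ γ)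

section KusuokaPartition

variable {T γ : ℝ} {n i : ℕ}

theorem kusuokaPartition_sub_pred (hi : 1 ≤ i) :
    kusuokaPartition T γ n i - kusuokaPartition T γ n (i - 1) =
      T * ((1 - (i : ℝ) / n + 1 / n) ^ γ - (1 - (i : ℝ) / n) ^ γ) := by
  unfold kusuokaPartition
  rw [Nat.cast_sub hi, Nat.cast_one, sub_div]
  ring_nf

theorem sub_kusuokaPartition : T - kusuokaPartition T γ n i = T * (1 - (i : ℝ) / n) ^ γ := by
  unfold kusuokaPartition
  ring

theorem kusuokaPartition_last_step (hγ : 0 < γ) (hn : n ≠ 0) :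
    kusuokaPartition T γ n n - kusuokaPartition T γ n (n - 1) = T * (n : ℝ) ^ (-γ) := by
  rw [kusuokaPartition_sub_pred (Nat.one_le_iff_ne_zero.mpr hn),
    div_self (Nat.cast_ne_zero.mpr hn), sub_self, zero_add, zero_rpow hγ.ne', sub_zero,
    one_div, inv_rpow (Nat.cast_nonneg n), rpow_neg (Nat.cast_nonneg n)]

theorem kusuokaPartition_last_step_rpow_half_le (hT : 0 ≤ T) {α : ℝ} (hα : α ≤ γ) (hγ : 0 < γ)
    (hn : n ≠ 0) :
    (kusuokaPartition T γ n n - kusuokaPartition T γ n (n - 1)) ^ ((1 : ℝ) / 2) ≤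
      T ^ ((1 : ℝ) / 2) * (n : ℝ) ^ (-α / 2) := by
  have hn₁ : (1 : ℝ) ≤ n := by exact_mod_cast Nat.one_le_iff_ne_zero.mpr hn
  rw [kusuokaPartition_last_step hγ hn, mul_rpow hT (by positivity), ← rpow_mul (by positivity)]
  gcongr
  linarith

theorem exists_sum_kusuokaPartition_ratio_le (hT : 0 ≤ T) (hγ : 1 ≤ γ) {j : ℕ}
    (hj : (j : ℝ) < γ + 1) :
    ∃ C, 0 ≤ C ∧ ∀ n : ℕ, ∑ i ∈ Icc 1 (n - 1),
      (kusuokaPartition T γ n i - kusuokaPartition T γ n (i - 1)) ^ (((j : ℝ) + 1) / 2) /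
        (T - kusuokaPartition T γ n i) ^ ((j : ℝ) / 2) ≤ C * (n : ℝ) ^ ((1 - (j : ℝ)) / 2) := by
  set q : ℝ := ((j : ℝ) + 1) / 2
  set β : ℝ := (γ - j - 1) / 2
  have hβ : -1 < β := by simp only [β]; linarith
  set B := (T * γ * 2 ^ (γ - 1)) ^ q / T ^ ((j : ℝ) / 2)
  have hC : 0 ≤ B * (1 + (β + 1)⁻¹) := by
    have : 0 < γ := by linarith
    have : 0 < β + 1 := by linarith
    positivity
  refine ⟨B * (1 + (β + 1)⁻¹), hC, fun n => ?_⟩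
  rcases n.eq_zero_or_pos with rfl | hn
  · simp only [Nat.zero_sub, Icc_eq_empty_of_lt zero_lt_one, sum_empty]
    exact mul_nonneg hC (by positivity)
  have hn' : (0 : ℝ) < n := by exact_mod_cast hn
  have term (i : ℕ) (hi : i ∈ Icc 1 (n - 1)) :
      (kusuokaPartition T γ n i - kusuokaPartition T γ n (i - 1)) ^ q /
        (T - kusuokaPartition T γ n i) ^ ((j : ℝ) / 2) ≤
      B * (1 - (i : ℝ) / n) ^ β * (1 / (n : ℝ)) ^ q := by
    obtain ⟨hi₁, hi₂⟩ := mem_Icc.mp hi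
    have hgap : 1 / (n : ℝ) ≤ 1 - (i : ℝ) / n := by
      rw [le_sub_iff_add_le, ← add_div, div_le_one hn']
      exact_mod_cast (by omega : 1 + i ≤ n)
    rw [kusuokaPartition_sub_pred hi₁, sub_kusuokaPartition]
    convert mul_rpow_add_sub_rpow_div_le hT ((by positivity : (0 : ℝ) < 1 / n).trans_le hgap)
      (by positivity) hgap hγ (by positivity : 0 ≤ q) using 3
    congr 1
    ring
  calc _ ≤ ∑ i ∈ Icc 1 (n - 1), B * (1 - (i : ℝ) / n) ^ β * (1 / (n : ℝ)) ^ q := sum_le_sum term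
    _ = B * (1 / (n : ℝ)) ^ q * ∑ i ∈ Icc 1 (n - 1), (1 - (i : ℝ) / n) ^ β := by
        rw [mul_sum]; exact sum_congr rfl fun i _ => by ring
    _ ≤ B * (1 / (n : ℝ)) ^ q * ((1 + (β + 1)⁻¹) * n) := by
        gcongr
        exact sum_Icc_one_sub_div_rpow_le hβ n
    _ = B * (1 + (β + 1)⁻¹) * (n : ℝ) ^ ((1 - (j : ℝ)) / 2) := by
        rw [show (1 - (j : ℝ)) / 2 = -q + 1 by simp only [q]; ring, rpow_add_one hn'.ne',
          one_div, inv_rpow hn'.le, rpow_neg hn'.le]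
        ring

end KusuokaPartition

/-- **Discretisation-error sum for the Kusuoka-type partition** (Statement 11).
For `T > 0`, an integer `m ≥ 2` and a real `γ > m`, consider for each `n ≥ 2` the
partition `t_i = T(1 − (1 − i/n)^γ)` of `[0, T]` with steps `s_i = t_i − t_{i−1}`.
Then there is a constant `C > 0`, depending only on `T`, `m` and `γ`, such that for all
`n ≥ 2`,
`s_n^{1/2} + Σ_{i=1}^{n−1} Σ_{j=m}^{m+1} s_i^{(j+1)/2}/(T − t_i)^{j/2} ≤ C n^{−(m−1)/2}`. -/
theorem kusuoka_partition_error_bound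
    (T : ℝ) (hT : 0 < T) (m : ℕ) (hm : 2 ≤ m) (γ : ℝ) (hγ : (m : ℝ) < γ) :
    ∃ C : ℝ, 0 < C ∧ ∀ n : ℕ, 2 ≤ n →
      (fun t : ℕ → ℝ => (fun s : ℕ → ℝ =>
          s n ^ ((1 : ℝ) / 2) +
            ∑ i ∈ Finset.Icc 1 (n - 1), ∑ j ∈ Finset.Icc m (m + 1),
              s i ^ (((j : ℝ) + 1) / 2) / (T - t i) ^ ((j : ℝ) / 2))
        (fun i => t i - t (i - 1)))
        (fun i => T * (1 - (1 - (i : ℝ) / (n : ℝ)) ^ γ))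
        ≤ C * (n : ℝ) ^ (-((m : ℝ) - 1) / 2) := by
  have hm₁ : (1 : ℝ) ≤ m := by exact_mod_cast (by omega : 1 ≤ m)
  obtain ⟨C₁, hC₁, hsum₁⟩ := exists_sum_kusuokaPartition_ratio_le (γ := γ) (j := m)
    hT.le (by linarith) (by linarith)
  obtain ⟨C₂, hC₂, hsum₂⟩ := exists_sum_kusuokaPartition_ratio_le (γ := γ) (j := m + 1)
    hT.le (by linarith) (by push_cast; linarith)
  refine ⟨T ^ ((1 : ℝ) / 2) + C₁ + C₂, by positivity, fun n hn => ?_⟩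
  have hn₁ : (1 : ℝ) ≤ n := by exact_mod_cast (by omega : 1 ≤ n)
  show (kusuokaPartition T γ n n - kusuokaPartition T γ n (n - 1)) ^ ((1 : ℝ) / 2) +
      ∑ i ∈ Icc 1 (n - 1), ∑ j ∈ Icc m (m + 1),
        (kusuokaPartition T γ n i - kusuokaPartition T γ n (i - 1)) ^ (((j : ℝ) + 1) / 2) /
          (T - kusuokaPartition T γ n i) ^ ((j : ℝ) / 2) ≤ _
  rw [sum_comm, sum_Icc_succ_top (by omega), Icc_self, sum_singleton]
  have hdecay : (n : ℝ) ^ ((1 - ((m + 1 : ℕ) : ℝ)) / 2) ≤ (n : ℝ) ^ (-((m : ℝ) - 1) / 2) :=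
    rpow_le_rpow_of_exponent_le hn₁ (by push_cast; linarith)
  calc _ ≤ T ^ ((1 : ℝ) / 2) * (n : ℝ) ^ (-((m : ℝ) - 1) / 2) +
        (C₁ * (n : ℝ) ^ ((1 - (m : ℝ)) / 2) + C₂ * (n : ℝ) ^ (-((m : ℝ) - 1) / 2)) := by
        gcongr
        · exact kusuokaPartition_last_step_rpow_half_le hT.le (by linarith) (by linarith) (by omega)
        · exact hsum₁ n
        · exact (hsum₂ n).trans (mul_le_mul_of_nonneg_left hdecay hC₂)
    _ = (T ^ ((1 : ℝ) / 2) + C₁ + C₂) * (n : ℝ) ^ (-((m : ℝ) - 1) / 2) := by ring_nf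
end

section
/- Let μ ∈ ℝ, α > 0, θ > 0, β ≠ 0 and ρ ∈ (−1, 1), and define the vector fields W_0, W_1, W_2 : ℝ³ → ℝ³ by W_0(y₁,y₂,y₃) = ( y₁(μ − y₂/2) − βρ y₁/4, α(θ − y₂) − β²/4, y₁ ), W_1(y₁,y₂,y₃) = ( y₁ √y₂, βρ √y₂, 0 ), W_2(y₁,y₂,y₃) = ( 0, β √(y₂(1 − ρ²)), 0 ), and define the Lie bracket [W_0, W_1](x) = DW_1(x) W_0(x) − DW_0(x) W_1(x), where DW_i(x) is the Jacobian matrix of W_i at x. Then for every x = (y₁, y₂, y₃) with y₁ > 0, y₂ > 0 and y₃ > 0, the three vectors W_1(x), W_2(x), [W_0, W_1](x) are linearly independent, i.e., they span ℝ³. -/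
/-- The drift Stratonovich vector field `W₀` of the Heston model. -/
noncomputable def hestonW0 (μ α θ β ρ : ℝ) : (Fin 3 → ℝ) → (Fin 3 → ℝ) := fun y =>
  ![y 0 * (μ - y 1 / 2) - β * ρ * y 0 / 4, α * (θ - y 1) - β ^ 2 / 4, y 0]

/-- The first diffusion vector field `W₁` of the Heston model. -/
noncomputable def hestonW1 (β ρ : ℝ) : (Fin 3 → ℝ) → (Fin 3 → ℝ) := fun y =>
  ![y 0 * Real.sqrt (y 1), β * ρ * Real.sqrt (y 1), 0]

/-- The second diffusion vector field `W₂` of the Heston model. -/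
noncomputable def hestonW2 (β ρ : ℝ) : (Fin 3 → ℝ) → (Fin 3 → ℝ) := fun y =>
  ![0, β * Real.sqrt (y 1 * (1 - ρ ^ 2)), 0]

/-- The Lie bracket `[V, W](x) = DW(x) V(x) − DV(x) W(x)` of vector fields on `ℝ³`,
where `D` denotes the (Fréchet) Jacobian. -/
noncomputable def lieBracketVF (V W : (Fin 3 → ℝ) → (Fin 3 → ℝ)) :
    (Fin 3 → ℝ) → (Fin 3 → ℝ) := fun x =>
  fderiv ℝ W x (V x) - fderiv ℝ V x (W x)

/-! The third components of `W₁` and `W₂` vanish, `W₂` points along the second axis, and the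
third component of `[W₀, W₁]` is `-y₁ √y₂` because `W₀` has third component `y₁` while that of
`W₁` is constant. So the three vectors are the rows of a triangular matrix with determinant
`-(y₁ √y₂)² β √(y₂ (1 - ρ²)) ≠ 0`. -/

theorem lieBracketVF_apply {V W : (Fin 3 → ℝ) → (Fin 3 → ℝ)} {x : Fin 3 → ℝ}
    (hV : DifferentiableAt ℝ V x) (hW : DifferentiableAt ℝ W x) (i : Fin 3) :
    lieBracketVF V W x i =
      fderiv ℝ (fun y => W y i) x (V x) - fderiv ℝ (fun y => V y i) x (W x) := by
  simp [lieBracketVF, fderiv_apply hV, fderiv_apply hW]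

theorem differentiable_hestonW0 (μ α θ β ρ : ℝ) : Differentiable ℝ (hestonW0 μ α θ β ρ) := by
  refine differentiable_pi.2 fun i => ?_
  fin_cases i <;> simp [hestonW0] <;> fun_prop

theorem differentiableAt_hestonW1 (β ρ : ℝ) {x : Fin 3 → ℝ} (hx : 0 < x 1) :
    DifferentiableAt ℝ (hestonW1 β ρ) x := by
  have : DifferentiableAt ℝ (fun y : Fin 3 → ℝ => Real.sqrt (y 1)) x :=
    (differentiableAt_apply 1 x).sqrt hx.ne'
  refine differentiableAt_pi.2 fun i => ?_
  fin_cases i <;> simp [hestonW1] <;> fun_prop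

theorem lieBracketVF_hestonW0_hestonW1_apply_two (μ α θ β ρ : ℝ) {x : Fin 3 → ℝ}
    (hx : 0 < x 1) :
    lieBracketVF (hestonW0 μ α θ β ρ) (hestonW1 β ρ) x 2 = -(x 0 * Real.sqrt (x 1)) := by
  rw [lieBracketVF_apply (differentiable_hestonW0 μ α θ β ρ x)
    (differentiableAt_hestonW1 β ρ hx)]
  simp [hestonW0, hestonW1, (hasFDerivAt_apply 0 x).fderiv]

theorem linearIndependent_fin_three_of_triangular {K : Type*} [Field K] {u w v : Fin 3 → K}
    (hu2 : u 2 = 0) (hw0 : w 0 = 0) (hw2 : w 2 = 0) (hu0 : u 0 ≠ 0) (hw1 : w 1 ≠ 0)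
    (hv2 : v 2 ≠ 0) : LinearIndependent K ![u, w, v] := by
  have hdet : (Matrix.of ![u, w, v]).det = u 0 * w 1 * v 2 := by
    simp [Matrix.det_fin_three, hu2, hw0, hw2]
  refine Matrix.linearIndependent_rows_of_det_ne_zero (A := Matrix.of ![u, w, v]) ?_
  rw [hdet]
  exact mul_ne_zero (mul_ne_zero hu0 hw1) hv2

theorem LinearIndependent.span_triple_eq_top {K V : Type*} [Field K] [AddCommGroup V]
    [Module K V] {a b c : V} (hli : LinearIndependent K ![a, b, c])
    (h : Module.finrank K V = 3) :
    Submodule.span K {a, b, c} = ⊤ := by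
  have hspan := hli.span_eq_top_of_card_eq_finrank (by simp [h])
  rwa [Matrix.range_cons, Matrix.range_cons_cons_empty, Set.singleton_union] at hspan

theorem heston_spanning_general
    (μ α θ β ρ : ℝ) (hβ : β ≠ 0)
    (hρ₁ : -1 < ρ) (hρ₂ : ρ < 1)
    (x : Fin 3 → ℝ) (hx0 : 0 < x 0) (hx1 : 0 < x 1) :
    LinearIndependent ℝ
      ![hestonW1 β ρ x, hestonW2 β ρ x,
        lieBracketVF (hestonW0 μ α θ β ρ) (hestonW1 β ρ) x] ∧
    Submodule.span ℝ
      ({hestonW1 β ρ x, hestonW2 β ρ x,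
        lieBracketVF (hestonW0 μ α θ β ρ) (hestonW1 β ρ) x} : Set (Fin 3 → ℝ)) = ⊤ := by
  have hW1 : x 0 * Real.sqrt (x 1) ≠ 0 := by positivity
  have hW2 : β * Real.sqrt (x 1 * (1 - ρ ^ 2)) ≠ 0 := by
    have : 0 < 1 - ρ ^ 2 := by nlinarith
    positivity
  have hli : LinearIndependent ℝ ![hestonW1 β ρ x, hestonW2 β ρ x,
      lieBracketVF (hestonW0 μ α θ β ρ) (hestonW1 β ρ) x] :=
    linearIndependent_fin_three_of_triangular (by simp [hestonW1]) (by simp [hestonW2])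
      (by simp [hestonW2]) (by simpa [hestonW1] using hW1) (by simpa [hestonW2] using hW2)
      (by simpa [lieBracketVF_hestonW0_hestonW1_apply_two μ α θ β ρ hx1] using hW1)
  exact ⟨hli, hli.span_triple_eq_top (by simp)⟩

/-- **Hörmander-type nondegeneracy of the Heston vector fields on the positive octant**
(Statement 14).  For any parameters `μ ∈ ℝ`, `α > 0`, `θ > 0`, `β ≠ 0`, `ρ ∈ (−1, 1)`
and any point `x = (y₁, y₂, y₃)` with `y₁, y₂, y₃ > 0`, the vectors
`W₁(x), W₂(x), [W₀, W₁](x)` are linearly independent, i.e. they span `ℝ³`. -/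
theorem heston_spanning
    (μ α θ β ρ : ℝ) (hα : 0 < α) (hθ : 0 < θ) (hβ : β ≠ 0)
    (hρ₁ : -1 < ρ) (hρ₂ : ρ < 1)
    (x : Fin 3 → ℝ) (hx0 : 0 < x 0) (hx1 : 0 < x 1) (hx2 : 0 < x 2) :
    LinearIndependent ℝ
      ![hestonW1 β ρ x, hestonW2 β ρ x,
        lieBracketVF (hestonW0 μ α θ β ρ) (hestonW1 β ρ) x] ∧
    Submodule.span ℝ
      ({hestonW1 β ρ x, hestonW2 β ρ x,
        lieBracketVF (hestonW0 μ α θ β ρ) (hestonW1 β ρ) x} : Set (Fin 3 → ℝ)) = ⊤ :=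
  heston_spanning_general μ α θ β ρ hβ hρ₁ hρ₂ x hx0 hx1
end
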